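/- The Snell-type distance d_Snell is a metric on ℝ⁵: for all S₁, S₂, S₃ ∈ ℝ⁵ one has d_Snell(S₁, S₂) ≥ 0; d_Snell(S₁, S₂) = 0 if and only if S₁ = S₂; d_Snell(S₁, S₂) = d_Snell(S₂, S₁); and the triangle inequality d_Snell(S₁, S₂) ≤ d_Snell(S₁, S₃) + d_Snell(S₃, S₂) holds. -/

import Mathlib

/-- The saturated norm N_s on states (u₁,u₂,u₃,θ,q) ∈ ℝ⁵. -/
noncomputable def satNorm (S : Fin 5 → ℝ) : ℝ :=
  Real.sqrt ((S 0)^2 + (S 1)^2 + (S 2)^2 + (S 3)^2 + (S 3 + S 4)^2)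

/-- The unsaturated norm N_u on states (u₁,u₂,u₃,θ,q) ∈ ℝ⁵. -/
noncomputable def unsatNorm (S : Fin 5 → ℝ) : ℝ :=
  Real.sqrt ((S 0)^2 + (S 1)^2 + (S 2)^2 + (S 3)^2 + (S 4)^2 + (S 3 + S 4)^2)

/-- The Snell-type distance on ℝ⁵: the unsaturated (resp. saturated) norm of the
difference when both states are in the unsaturated (resp. saturated) phase, and the
infimum over interface points of the sum of the broken path lengths otherwise. -/
noncomputable def dSnell (S₁ S₂ : Fin 5 → ℝ) : ℝ :=
  if S₁ 4 < 0 then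
    (if S₂ 4 < 0 then unsatNorm (S₁ - S₂)
     else sInf {r : ℝ | ∃ I : Fin 5 → ℝ, I 4 = 0 ∧ r = satNorm (S₂ - I) + unsatNorm (S₁ - I)})
  else
    (if S₂ 4 < 0 then
      sInf {r : ℝ | ∃ I : Fin 5 → ℝ, I 4 = 0 ∧ r = satNorm (S₁ - I) + unsatNorm (S₂ - I)}
     else satNorm (S₁ - S₂))

lemma vec6_five (a b c d e f : ℝ) : ![a,b,c,d,e,f] (5 : Fin 6) = f := rfl

noncomputable def Ts (v : Fin 5 → ℝ) : EuclideanSpace ℝ (Fin 5) := WithLp.toLp 2 ![v 0, v 1, v 2, v 3, v 3 + v 4]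
noncomputable def Tu (v : Fin 5 → ℝ) : EuclideanSpace ℝ (Fin 6) := WithLp.toLp 2 ![v 0, v 1, v 2, v 3, v 4, v 3 + v 4]

lemma satNorm_eq (v : Fin 5 → ℝ) : satNorm v = ‖Ts v‖ := by
  simp [satNorm, Ts, EuclideanSpace.norm_eq, Fin.sum_univ_five, Real.norm_eq_abs, sq_abs]

lemma unsatNorm_eq (v : Fin 5 → ℝ) : unsatNorm v = ‖Tu v‖ := by
  simp [unsatNorm, Tu, EuclideanSpace.norm_eq, Fin.sum_univ_six, Real.norm_eq_abs, sq_abs, vec6_five]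

lemma Ts_sub (a b : Fin 5 → ℝ) : Ts (a - b) = Ts a - Ts b := by
  ext i; fin_cases i <;> simp [Ts] <;> ring

lemma Tu_sub (a b : Fin 5 → ℝ) : Tu (a - b) = Tu a - Tu b := by
  ext i; fin_cases i <;> simp [Tu, vec6_five] <;> ring

lemma satNorm_nonneg (v : Fin 5 → ℝ) : 0 ≤ satNorm v := Real.sqrt_nonneg _
lemma unsatNorm_nonneg (v : Fin 5 → ℝ) : 0 ≤ unsatNorm v := Real.sqrt_nonneg _

lemma satNorm_comm (a b : Fin 5 → ℝ) : satNorm (a - b) = satNorm (b - a) := by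
  rw [satNorm_eq, satNorm_eq, Ts_sub, Ts_sub, norm_sub_rev]

lemma unsatNorm_comm (a b : Fin 5 → ℝ) : unsatNorm (a - b) = unsatNorm (b - a) := by
  rw [unsatNorm_eq, unsatNorm_eq, Tu_sub, Tu_sub, norm_sub_rev]

lemma satNorm_triangle (a b c : Fin 5 → ℝ) :
    satNorm (a - b) ≤ satNorm (a - c) + satNorm (c - b) := by
  rw [satNorm_eq, satNorm_eq, satNorm_eq, Ts_sub, Ts_sub, Ts_sub]
  exact norm_sub_le_norm_sub_add_norm_sub _ _ _

lemma unsatNorm_triangle (a b c : Fin 5 → ℝ) :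
    unsatNorm (a - b) ≤ unsatNorm (a - c) + unsatNorm (c - b) := by
  rw [unsatNorm_eq, unsatNorm_eq, unsatNorm_eq, Tu_sub, Tu_sub, Tu_sub]
  exact norm_sub_le_norm_sub_add_norm_sub _ _ _

lemma satNorm_eq_zero (v : Fin 5 → ℝ) : satNorm v = 0 ↔ v = 0 := by
  constructor
  · intro h
    rw [satNorm, Real.sqrt_eq_zero'] at h
    have h0 := sq_nonneg (v 0); have h1 := sq_nonneg (v 1); have h2 := sq_nonneg (v 2)
    have h3 := sq_nonneg (v 3); have h4 := sq_nonneg (v 3 + v 4)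
    have e0 : v 0 = 0 := by nlinarith
    have e1 : v 1 = 0 := by nlinarith
    have e2 : v 2 = 0 := by nlinarith
    have e3 : v 3 = 0 := by nlinarith
    have e4 : v 4 = 0 := by nlinarith
    funext i; fin_cases i
    · exact e0
    · exact e1
    · exact e2
    · exact e3
    · exact e4
  · rintro rfl; simp [satNorm]

lemma unsatNorm_eq_zero (v : Fin 5 → ℝ) : unsatNorm v = 0 ↔ v = 0 := by
  constructor
  · intro h
    rw [unsatNorm, Real.sqrt_eq_zero'] at h
    have h0 := sq_nonneg (v 0); have h1 := sq_nonneg (v 1); have h2 := sq_nonneg (v 2)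
    have h3 := sq_nonneg (v 3); have h4 := sq_nonneg (v 4); have h5 := sq_nonneg (v 3 + v 4)
    have e0 : v 0 = 0 := by nlinarith
    have e1 : v 1 = 0 := by nlinarith
    have e2 : v 2 = 0 := by nlinarith
    have e3 : v 3 = 0 := by nlinarith
    have e4 : v 4 = 0 := by nlinarith
    funext i; fin_cases i
    · exact e0
    · exact e1
    · exact e2
    · exact e3
    · exact e4
  · rintro rfl; simp [unsatNorm]

lemma satNorm_le_unsatNorm (v : Fin 5 → ℝ) : satNorm v ≤ unsatNorm v := by
  apply Real.sqrt_le_sqrt; nlinarith [sq_nonneg (v 4)]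

lemma satNorm_eq_unsatNorm (v : Fin 5 → ℝ) (h : v 4 = 0) : satNorm v = unsatNorm v := by
  rw [satNorm, unsatNorm, h]; ring_nf

def mixSet (A B : Fin 5 → ℝ) : Set ℝ :=
  {r : ℝ | ∃ I : Fin 5 → ℝ, I 4 = 0 ∧ r = satNorm (A - I) + unsatNorm (B - I)}

lemma mixSet_nonempty (A B : Fin 5 → ℝ) : (mixSet A B).Nonempty :=
  ⟨_, ⟨fun i => if i = 4 then 0 else B i, by simp, rfl⟩⟩

lemma mixSet_mem_nonneg {A B : Fin 5 → ℝ} {r : ℝ} (hr : r ∈ mixSet A B) : 0 ≤ r := by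
  obtain ⟨I, -, rfl⟩ := hr
  exact add_nonneg (satNorm_nonneg _) (unsatNorm_nonneg _)

lemma mixSet_bddBelow (A B : Fin 5 → ℝ) : BddBelow (mixSet A B) :=
  ⟨0, fun r hr => mixSet_mem_nonneg hr⟩

lemma le_of_mem_mixSet {A B : Fin 5 → ℝ} {r : ℝ} (hr : r ∈ mixSet A B) :
    satNorm (A - B) ≤ r := by
  obtain ⟨I, -, rfl⟩ := hr
  calc satNorm (A - B) ≤ satNorm (A - I) + satNorm (I - B) := satNorm_triangle _ _ _
    _ = satNorm (A - I) + satNorm (B - I) := by rw [satNorm_comm I B]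
    _ ≤ satNorm (A - I) + unsatNorm (B - I) :=
        add_le_add (le_refl _) (satNorm_le_unsatNorm _)

lemma satNorm_le_sInf_mixSet (A B : Fin 5 → ℝ) : satNorm (A - B) ≤ sInf (mixSet A B) :=
  le_csInf (mixSet_nonempty A B) fun _ hr => le_of_mem_mixSet hr

lemma sInf_mixSet_nonneg (A B : Fin 5 → ℝ) : 0 ≤ sInf (mixSet A B) :=
  Real.sInf_nonneg fun _ hr => mixSet_mem_nonneg hr

lemma tri_mix_sat (A B C : Fin 5 → ℝ) :
    sInf (mixSet A B) ≤ satNorm (A - C) + sInf (mixSet C B) := by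
  rw [← sub_le_iff_le_add']
  apply le_csInf (mixSet_nonempty C B)
  rintro r ⟨I, hI, rfl⟩
  have hm : satNorm (A - I) + unsatNorm (B - I) ∈ mixSet A B := ⟨I, hI, rfl⟩
  have h1 := csInf_le (mixSet_bddBelow A B) hm
  have h2 := satNorm_triangle A I C
  linarith

lemma tri_mix_unsat (A B C : Fin 5 → ℝ) :
    sInf (mixSet A B) ≤ sInf (mixSet A C) + unsatNorm (C - B) := by
  rw [← sub_le_iff_le_add]
  apply le_csInf (mixSet_nonempty A C)
  rintro r ⟨I, hI, rfl⟩
  have hm : satNorm (A - I) + unsatNorm (B - I) ∈ mixSet A B := ⟨I, hI, rfl⟩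
  have h1 := csInf_le (mixSet_bddBelow A B) hm
  have h2 := unsatNorm_triangle B I C
  have h3 : unsatNorm (B - C) = unsatNorm (C - B) := unsatNorm_comm _ _
  linarith

lemma tri_sat_two_mix (A B C : Fin 5 → ℝ) :
    satNorm (A - B) ≤ sInf (mixSet A C) + sInf (mixSet B C) := by
  have h1 := satNorm_le_sInf_mixSet A C
  have h2 := satNorm_le_sInf_mixSet B C
  have h3 := satNorm_triangle A B C
  have h4 : satNorm (C - B) = satNorm (B - C) := satNorm_comm _ _
  linarith

lemma tri_unsat_two_mix (A B C : Fin 5 → ℝ) :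
    unsatNorm (A - B) ≤ sInf (mixSet C A) + sInf (mixSet C B) := by
  rw [← sub_le_iff_le_add']
  apply le_csInf (mixSet_nonempty C B)
  rintro s ⟨J, hJ, rfl⟩
  rw [sub_le_iff_le_add', ← sub_le_iff_le_add]
  apply le_csInf (mixSet_nonempty C A)
  rintro r ⟨I, hI, rfl⟩
  have h1 := unsatNorm_triangle A B I
  have h2 := unsatNorm_triangle I B J
  have h3 := unsatNorm_triangle J B B
  have hIJ : (I - J) 4 = 0 := by simp [hI, hJ]
  have h4 : unsatNorm (I - J) = satNorm (I - J) := (satNorm_eq_unsatNorm _ hIJ).symm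
  have h5 := satNorm_triangle I J C
  have h6 : satNorm (I - C) = satNorm (C - I) := satNorm_comm _ _
  have h7 : unsatNorm (J - B) = unsatNorm (B - J) := unsatNorm_comm _ _
  have h8 := unsatNorm_triangle A B J
  -- chain: unsat(A-B) ≤ unsat(A-I) + unsat(I-B) ≤ unsat(A-I) + unsat(I-J) + unsat(J-B)
  have c1 := unsatNorm_triangle A I J
  have c2 := unsatNorm_triangle A B J
  -- direct: unsat(A-B) ≤ unsat(A-I)+unsat(I-B); unsat(I-B) ≤ unsat(I-J)+unsat(J-B)
  have d1 := unsatNorm_triangle A B I  -- unsat(A-B) ≤ unsat(A-I)+unsat(I-B)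
  have d2 := unsatNorm_triangle I B J  -- unsat(I-B) ≤ unsat(I-J)+unsat(J-B)
  have hCA : unsatNorm (A - I) = unsatNorm (A - I) := rfl
  linarith

lemma satNorm_sub_eq_zero_iff (a b : Fin 5 → ℝ) : satNorm (a - b) = 0 ↔ a = b := by
  rw [satNorm_eq_zero, sub_eq_zero]

lemma unsatNorm_sub_eq_zero_iff (a b : Fin 5 → ℝ) : unsatNorm (a - b) = 0 ↔ a = b := by
  rw [unsatNorm_eq_zero, sub_eq_zero]

lemma sInf_mixSet_ne_zero {A B : Fin 5 → ℝ} (h : A ≠ B) : sInf (mixSet A B) ≠ 0 := by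
  have h1 := satNorm_le_sInf_mixSet A B
  have h2 : 0 < satNorm (A - B) := by
    rcases lt_or_eq_of_le (satNorm_nonneg (A - B)) with h' | h'
    · exact h'
    · exact absurd ((satNorm_sub_eq_zero_iff A B).mp h'.symm) h
  intro h0; rw [h0] at h1; linarith


/-- the Snell-type distance is a metric on ℝ⁵. -/
theorem dSnell_is_metric :
    (∀ S₁ S₂ : Fin 5 → ℝ, 0 ≤ dSnell S₁ S₂) ∧
    (∀ S₁ S₂ : Fin 5 → ℝ, dSnell S₁ S₂ = 0 ↔ S₁ = S₂) ∧
    (∀ S₁ S₂ : Fin 5 → ℝ, dSnell S₁ S₂ = dSnell S₂ S₁) ∧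
    (∀ S₁ S₂ S₃ : Fin 5 → ℝ, dSnell S₁ S₂ ≤ dSnell S₁ S₃ + dSnell S₃ S₂) := by
  refine ⟨?_, ?_, ?_, ?_⟩
  · intro S₁ S₂
    unfold dSnell
    split_ifs
    · exact unsatNorm_nonneg _
    · exact sInf_mixSet_nonneg S₂ S₁
    · exact sInf_mixSet_nonneg S₁ S₂
    · exact satNorm_nonneg _
  · intro S₁ S₂
    unfold dSnell
    split_ifs with h1 h2 h2
    · exact unsatNorm_sub_eq_zero_iff S₁ S₂
    · constructor
      · intro h; exact absurd h (sInf_mixSet_ne_zero (by intro he; rw [he] at h2; exact h2 h1))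
      · intro h; rw [h] at h1; exact absurd h1 h2
    · constructor
      · intro h; exact absurd h (sInf_mixSet_ne_zero (by intro he; rw [he] at h1; exact h1 h2))
      · intro h; rw [← h] at h2; exact absurd h2 h1
    · exact satNorm_sub_eq_zero_iff S₁ S₂
  · intro S₁ S₂
    unfold dSnell
    split_ifs
    · exact unsatNorm_comm _ _
    · rfl
    · rfl
    · exact satNorm_comm _ _
  · intro S₁ S₂ S₃
    unfold dSnell
    split_ifs with h1 h2 h3 h3 h2 h3 h3
    · exact unsatNorm_triangle _ _ _
    · -- S₁ U, S₂ U, S₃ S : unsat(S₁-S₂) ≤ sInf(mixSet S₃ S₁) + sInf(mixSet S₃ S₂)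
      exact tri_unsat_two_mix S₁ S₂ S₃
    · -- S₁ U, S₂ S, S₃ U : sInf(mixSet S₂ S₁) ≤ unsat(S₁-S₃) + sInf(mixSet S₂ S₃)
      have := tri_mix_unsat S₂ S₁ S₃
      rw [unsatNorm_comm S₃ S₁] at this
      show sInf (mixSet S₂ S₁) ≤ unsatNorm (S₁ - S₃) + sInf (mixSet S₂ S₃)
      linarith
    · -- S₁ U, S₂ S, S₃ S : sInf(mixSet S₂ S₁) ≤ sInf(mixSet S₃ S₁) + sat(S₃-S₂)
      have := tri_mix_sat S₂ S₁ S₃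
      rw [satNorm_comm S₂ S₃] at this
      show sInf (mixSet S₂ S₁) ≤ sInf (mixSet S₃ S₁) + satNorm (S₃ - S₂)
      linarith
    · -- S₁ S, S₂ U, S₃ U : sInf(mixSet S₁ S₂) ≤ sInf(mixSet S₁ S₃) + unsat(S₃-S₂)
      exact tri_mix_unsat S₁ S₂ S₃
    · -- S₁ S, S₂ U, S₃ S : sInf(mixSet S₁ S₂) ≤ sat(S₁-S₃) + sInf(mixSet S₃ S₂)
      exact tri_mix_sat S₁ S₂ S₃
    · -- S₁ S, S₂ S, S₃ U : sat(S₁-S₂) ≤ sInf(mixSet S₁ S₃) + sInf(mixSet S₂ S₃)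
      exact tri_sat_two_mix S₁ S₂ S₃
    · exact satNorm_triangle _ _ _
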